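/- Let B = (b_1, …, b_n) ∈ ℝ^{m×n} be a basis with n = pk + d for integers p ≥ 1, d ≥ k ≥ 2, let δ ≥ 1, and let γ_k ≥ 1 be an admissible Hermite bound for rank k. Assume that for each i ∈ [0, p−1] the block B_{[ik+d+1,(i+1)k+d]} is δ-SVP-reduced, and for each i ∈ [0, p−2] the block B_{[ik+d+2,(i+1)k+d+1]} is δ-DSVP-reduced. Then B_{[d+1,n]} is (δ²γ_k)^{(n−d−1)/(2(k−1))}-HSVP-reduced, i.e., ‖b*_{d+1}‖ ≤ (δ²γ_k)^{(n−d−1)/(2(k−1))} · vol(L(B_{[d+1,n]}))^{1/(n−d)}. -/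

import Mathlib

noncomputable section

/-- Euclidean space `ℝ^m`. -/
abbrev Euc (m : ℕ) : Type := EuclideanSpace ℝ (Fin m)

variable {m : ℕ}

/-- `projGS B s` is the orthogonal projection `π_{s+1}` onto the subspace orthogonal to
`b_1, …, b_s` (0-based: orthogonal to `B 0, …, B (s-1)`). -/
def projGS (B : ℕ → Euc m) (s : ℕ) (x : Euc m) : Euc m :=
  (Submodule.orthogonalProjectionOnto ((Submodule.span ℝ (B '' Set.Iio s))ᗮ) x : Euc m)

/-- The Gram–Schmidt vector `b*_{i+1}` (0-based index `i`). -/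
def gsoVec (B : ℕ → Euc m) (i : ℕ) : Euc m := projGS B i (B i)

/-- The projected block `B_{[s+1, s+ℓ]}` (0-based start `s`; the length is supplied
separately to the predicates below). -/
def block (B : ℕ → Euc m) (s : ℕ) : ℕ → Euc m := fun t => projGS B s (B (s + t))

/-- Gram matrix of the first `ℓ` vectors. -/
def gram (B : ℕ → Euc m) (ℓ : ℕ) : Matrix (Fin ℓ) (Fin ℓ) ℝ :=
  Matrix.of fun i j => (inner ℝ (B i) (B j) : ℝ)

/-- `vol(L(B)) = det(BᵀB)^{1/2}` for the first `ℓ` vectors. -/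
def volB (B : ℕ → Euc m) (ℓ : ℕ) : ℝ := Real.sqrt (gram B ℓ).det

/-- The lattice generated by the first `ℓ` vectors. -/
def latticeSpan (B : ℕ → Euc m) (ℓ : ℕ) : Submodule ℤ (Euc m) :=
  Submodule.span ℤ (B '' Set.Iio ℓ)

/-- `λ₁(L)`: the minimum norm of a nonzero lattice vector. -/
def lambda1 (L : Submodule ℤ (Euc m)) : ℝ :=
  sInf {r : ℝ | ∃ x ∈ L, x ≠ 0 ∧ ‖x‖ = r}

/-- `B` (of rank `ℓ`) is `δ`-SVP-reduced. -/
def SVPReduced (δ : ℝ) (B : ℕ → Euc m) (ℓ : ℕ) : Prop :=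
  ‖B 0‖ ≤ δ * lambda1 (latticeSpan B ℓ)

/-- `B` (of rank `ℓ`) is `δ`-HSVP-reduced. -/
def HSVPReduced (δ : ℝ) (B : ℕ → Euc m) (ℓ : ℕ) : Prop :=
  ‖B 0‖ ≤ δ * volB B ℓ ^ ((1 : ℝ) / ℓ)

/-- The dual basis `B^× = B (BᵀB)⁻¹` of the first `ℓ` vectors (extended by `0`). -/
def dualFam (B : ℕ → Euc m) (ℓ : ℕ) : ℕ → Euc m := fun i =>
  if h : i < ℓ then ∑ j : Fin ℓ, ((gram B ℓ)⁻¹ j ⟨i, h⟩) • B j else 0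

/-- The reversed dual basis `B^{-s}`. -/
def revDual (B : ℕ → Euc m) (ℓ : ℕ) : ℕ → Euc m := fun i => dualFam B ℓ (ℓ - 1 - i)

/-- `B` (of rank `ℓ`) is `δ`-DHSVP-reduced: its reversed dual basis is `δ`-HSVP-reduced. -/
def DHSVPReduced (δ : ℝ) (B : ℕ → Euc m) (ℓ : ℕ) : Prop :=
  HSVPReduced δ (revDual B ℓ) ℓ

/-- `B = (b_1, …, b_{d+1})` is `δ`-twin-reduced: `B_{[1,d]}` is `δ`-HSVP-reduced and
`B_{[2,d+1]}` is `δ`-DHSVP-reduced. -/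
def TwinReduced (δ : ℝ) (B : ℕ → Euc m) (d : ℕ) : Prop :=
  HSVPReduced δ (block B 0) d ∧ DHSVPReduced δ (block B 1) d

/-- Gram–Schmidt coefficient `μ_{i,j}` (0-based). -/
def mu (B : ℕ → Euc m) (i j : ℕ) : ℝ :=
  (inner ℝ (B i) (gsoVec B j) : ℝ) / ‖gsoVec B j‖ ^ 2

/-- The first `ℓ` vectors are size-reduced. -/
def SizeReduced (B : ℕ → Euc m) (ℓ : ℕ) : Prop :=
  ∀ i j, j < i → i < ℓ → |mu B i j| ≤ 1 / 2

/-- The first `ℓ` vectors are `ε`-LLL-reduced. -/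
def LLLReduced (ε : ℝ) (B : ℕ → Euc m) (ℓ : ℕ) : Prop :=
  SizeReduced B ℓ ∧
    ∀ i, 0 < i → i < ℓ →
      ‖gsoVec B (i - 1)‖ ^ 2 ≤ (1 + ε) * ‖mu B i (i - 1) • gsoVec B (i - 1) + gsoVec B i‖ ^ 2

/-- `B` (of rank `ℓ`) is `δ`-DSVP-reduced: its reversed dual basis is `δ`-SVP-reduced
and `B` is `(1/3)`-LLL-reduced. -/
def DSVPReduced (δ : ℝ) (B : ℕ → Euc m) (ℓ : ℕ) : Prop :=
  SVPReduced δ (revDual B ℓ) ℓ ∧ LLLReduced (1 / 3) B ℓ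

/-- `γ` is an admissible Hermite bound for rank `r`: every lattice generated by `r`
linearly independent vectors of a Euclidean space satisfies `λ₁² ≤ γ · vol^{2/r}`. -/
def IsHermiteBound (γ : ℝ) (r : ℕ) : Prop :=
  ∀ (m' : ℕ) (v : ℕ → Euc m'), LinearIndependent ℝ (fun i : Fin r => v i) →
    lambda1 (latticeSpan v r) ^ 2 ≤ γ * volB v r ^ ((2 : ℝ) / r)

/-!
Write `aⱼ = log ‖b*ⱼ‖` and `c = log (δ √γ_k)`. Hermite's bound turns the δ-SVP-reducedness of a block
into `a(first) ≤ c + (mean of a over the block)`. Applied to the reversed dual basis of a block,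
whose first vector `x` satisfies `⟪x, b*_last⟫ = 1` and whose volume is the inverse of the block's,
it gives `(mean of a over the block) ≤ c + a(last)`. The i-th dual block is the i-th primal block
shifted by one, so its last vector is the first vector of the (i+1)-st primal block; combining the
two inequalities, the first vectors of consecutive primal blocks satisfy
`a(first_i) ≤ a(first_{i+1}) + 2kc/(k-1)`. Summing the primal inequalities over the p blocks gives
`a_{d+1} ≤ (pk-1)/(k-1) · c + (mean of a over B_{[d+1,n]})`, the claim in logarithmic form.
-/
open Finset Submodule RealInnerProductSpace InnerProductSpace

theorem mem_orthogonal_span {E : Type*} [NormedAddCommGroup E] [InnerProductSpace ℝ E]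
    {s : Set E} {v : E} (h : ∀ u ∈ s, ⟪u, v⟫ = 0) : v ∈ (span ℝ s)ᗮ := by
  have : span ℝ s ≤ (ℝ ∙ v)ᗮ :=
    span_le.2 fun u hu => mem_orthogonal_singleton_iff_inner_left.2 (h u hu)
  exact fun u hu => mem_orthogonal_singleton_iff_inner_left.1 (this hu)

theorem projGS_eq_starProjection (B : ℕ → Euc m) (s : ℕ) (x : Euc m) :
    projGS B s x = (span ℝ (B '' Set.Iio s))ᗮ.starProjection x :=
  coe_orthogonalProjectionOnto_apply _ x

theorem projGS_apply (B : ℕ → Euc m) (s : ℕ) (x : Euc m) :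
    projGS B s x = x - (span ℝ (B '' Set.Iio s)).starProjection x := by
  rw [projGS_eq_starProjection, starProjection_orthogonal_val]

theorem projGS_mem_orthogonal (B : ℕ → Euc m) (s : ℕ) (x : Euc m) :
    projGS B s x ∈ (span ℝ (B '' Set.Iio s))ᗮ :=
  (orthogonalProjectionOnto _ x).2

theorem sub_projGS_mem (B : ℕ → Euc m) (s : ℕ) (x : Euc m) :
    x - projGS B s x ∈ span ℝ (B '' Set.Iio s) := by
  rw [projGS_apply, sub_sub_cancel]
  exact starProjection_apply_mem _ x

theorem sub_gsoVec_mem (B : ℕ → Euc m) (i : ℕ) :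
    B i - gsoVec B i ∈ span ℝ (B '' Set.Iio i) :=
  sub_projGS_mem B i (B i)

theorem gsoVec_eq_gramSchmidt (B : ℕ → Euc m) (i : ℕ) :
    gsoVec B i = gramSchmidt ℝ B i := by
  rw [gsoVec, projGS_apply, sub_eq_iff_eq_add, ← sub_eq_iff_eq_add', eq_comm]
  apply eq_starProjection_of_mem_orthogonal
  · rw [← span_gramSchmidt_Iio, gramSchmidt_def, sub_sub_cancel]
    refine sum_mem fun j hj => span_mono ?_ ((ℝ ∙ _).starProjection_apply_mem _)
    exact Set.singleton_subset_iff.2 ⟨j, by simpa using hj, rfl⟩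
  · rw [sub_sub_cancel, ← span_gramSchmidt_Iio]
    refine mem_orthogonal_span ?_
    rintro _ ⟨j, hj, rfl⟩
    exact gramSchmidt_orthogonal ℝ B (ne_of_lt hj)

theorem inner_gsoVec_eq_norm_sq (B : ℕ → Euc m) (i : ℕ) :
    ⟪B i, gsoVec B i⟫ = ‖gsoVec B i‖ ^ 2 := by
  have h0 : ⟪B i - gsoVec B i, gsoVec B i⟫ = 0 :=
    inner_right_of_mem_orthogonal (sub_gsoVec_mem B i) (projGS_mem_orthogonal B i (B i))
  rw [inner_sub_left, real_inner_self_eq_norm_sq, sub_eq_zero] at h0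
  exact h0

theorem mu_mul_norm_sq (B : ℕ → Euc m) (i j : ℕ) :
    mu B i j * ‖gsoVec B j‖ ^ 2 = ⟪B i, gsoVec B j⟫ := by
  rcases eq_or_ne (gsoVec B j) 0 with h | h
  · simp [h]
  · exact div_mul_cancel₀ _ (by positivity)

theorem mu_eq_zero_of_lt (B : ℕ → Euc m) {i j : ℕ} (h : i < j) : mu B i j = 0 := by
  rw [mu, real_inner_comm, gsoVec_eq_gramSchmidt, gramSchmidt_inv_triangular ℝ B h, zero_div]

theorem mu_self_smul_gsoVec (B : ℕ → Euc m) (i : ℕ) : mu B i i • gsoVec B i = gsoVec B i := by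
  rcases eq_or_ne (gsoVec B i) 0 with h | h
  · rw [h, smul_zero]
  · rw [mu, inner_gsoVec_eq_norm_sq, div_self (by positivity), one_smul]

theorem sum_mu_smul_gsoVec (B : ℕ → Euc m) {i ℓ : ℕ} (hi : i < ℓ) :
    ∑ j ∈ range ℓ, mu B i j • gsoVec B j = B i := by
  rw [← sum_subset (range_subset_range.2 hi)]
  · rw [sum_range_succ, mu_self_smul_gsoVec, ← Nat.Iio_eq_range, gsoVec_eq_gramSchmidt,
      gramSchmidt_def'' ℝ B i, add_comm]
    congr 1
    refine sum_congr rfl fun j _ => ?_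
    rw [mu, gsoVec_eq_gramSchmidt, real_inner_comm]
    simp
  · intro j _ hj
    rw [mu_eq_zero_of_lt B (by simpa using hj), zero_smul]

theorem det_gram_eq_prod (B : ℕ → Euc m) (ℓ : ℕ) :
    (gram B ℓ).det = ∏ j ∈ range ℓ, ‖gsoVec B j‖ ^ 2 := by
  set M : Matrix (Fin ℓ) (Fin ℓ) ℝ := Matrix.of fun i j => mu B i j
  have hgram : gram B ℓ =
      M * Matrix.diagonal (fun j : Fin ℓ => ‖gsoVec B j‖ ^ 2) * M.transpose := by
    ext i j
    rw [Matrix.mul_apply, gram, Matrix.of_apply, ← sum_mu_smul_gsoVec B i.2, sum_inner,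
      ← Fin.sum_univ_eq_sum_range (fun a => ⟪mu B i a • gsoVec B a, B j⟫)]
    refine sum_congr rfl fun a _ => ?_
    rw [Matrix.mul_diagonal, real_inner_smul_left, real_inner_comm, ← mu_mul_norm_sq]
    simp only [M, Matrix.transpose_apply, Matrix.of_apply]
    ring
  have hM : M.det = ∏ j : Fin ℓ, mu B j j :=
    Matrix.det_of_isLowerTriangular M fun i j hij => mu_eq_zero_of_lt B hij
  rw [hgram, Matrix.det_mul, Matrix.det_mul, Matrix.det_transpose, Matrix.det_diagonal, hM,
    ← Fin.prod_univ_eq_prod_range (fun j => ‖gsoVec B j‖ ^ 2), ← prod_mul_distrib,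
    ← prod_mul_distrib]
  refine prod_congr rfl fun j _ => ?_
  rw [mu_mul_norm_sq, inner_gsoVec_eq_norm_sq, mul_comm, mu_mul_norm_sq, inner_gsoVec_eq_norm_sq]

theorem volB_eq_prod (B : ℕ → Euc m) (ℓ : ℕ) : volB B ℓ = ∏ j ∈ range ℓ, ‖gsoVec B j‖ := by
  rw [volB, det_gram_eq_prod, prod_pow]
  exact Real.sqrt_sq (prod_nonneg fun _ _ => norm_nonneg _)

theorem volB_nonneg (B : ℕ → Euc m) (ℓ : ℕ) : 0 ≤ volB B ℓ := Real.sqrt_nonneg _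

theorem linearIndependent_iff_gsoVec_ne_zero (B : ℕ → Euc m) (ℓ : ℕ) :
    LinearIndependent ℝ (fun i : Fin ℓ => B i) ↔ ∀ i < ℓ, gsoVec B i ≠ 0 := by
  rw [← Matrix.det_gram_ne_zero_iff_linearIndependent]
  change (gram B ℓ).det ≠ 0 ↔ _
  simp [det_gram_eq_prod, prod_ne_zero_iff]

theorem gsoVec_ne_zero {B : ℕ → Euc m} {n : ℕ} (hB : LinearIndependent ℝ (fun i : Fin n => B i))
    {i : ℕ} (hi : i < n) : gsoVec B i ≠ 0 :=
  (linearIndependent_iff_gsoVec_ne_zero B n).1 hB i hi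

theorem volB_pos {B : ℕ → Euc m} {ℓ : ℕ} (hB : LinearIndependent ℝ (fun i : Fin ℓ => B i)) :
    0 < volB B ℓ := by
  rw [volB_eq_prod]
  exact prod_pos fun j hj => norm_pos_iff.2 (gsoVec_ne_zero hB (mem_range.1 hj))

theorem span_image_Iio_mono (B : ℕ → Euc m) {s t : ℕ} (h : s ≤ t) :
    span ℝ (B '' Set.Iio s) ≤ span ℝ (B '' Set.Iio t) :=
  span_mono (Set.image_mono fun _ hj => lt_of_lt_of_le hj h)

theorem block_mem_span (B : ℕ → Euc m) {s j t : ℕ} (hj : j < t) :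
    block B s j ∈ span ℝ (B '' Set.Iio (s + t)) := by
  have hB : B (s + j) ∈ span ℝ (B '' Set.Iio (s + t)) := subset_span ⟨s + j, by simpa, rfl⟩
  have := sub_mem hB <|
    span_image_Iio_mono B (Nat.le_add_right s t) (sub_projGS_mem B s (B (s + j)))
  rwa [sub_sub_cancel] at this

theorem projGS_mem_span_block (B : ℕ → Euc m) (s t : ℕ) {x : Euc m}
    (hx : x ∈ span ℝ (B '' Set.Iio (s + t))) :
    projGS B s x ∈ span ℝ (block B s '' Set.Iio t) := by
  set P := (span ℝ (B '' Set.Iio s))ᗮ.starProjection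
  suffices span ℝ (B '' Set.Iio (s + t)) ≤
      (span ℝ (block B s '' Set.Iio t)).comap (P : Euc m →ₗ[ℝ] Euc m) by
    rw [projGS_eq_starProjection]
    exact this hx
  rw [span_le]
  rintro _ ⟨j, hj, rfl⟩
  rcases lt_or_ge j s with hjs | hjs
  · have hBj : B j ∈ span ℝ (B '' Set.Iio s) := subset_span ⟨j, hjs, rfl⟩
    simp only [SetLike.mem_coe, mem_comap, ContinuousLinearMap.coe_coe, P,
      starProjection_orthogonal_apply_eq_zero hBj, zero_mem]
  · obtain ⟨i, rfl⟩ := Nat.exists_eq_add_of_le hjs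
    exact subset_span ⟨i, by simpa using hj, (projGS_eq_starProjection B s _).symm⟩

theorem gsoVec_block (B : ℕ → Euc m) (s t : ℕ) : gsoVec (block B s) t = gsoVec B (s + t) := by
  set u := gsoVec B (s + t)
  have hu : u ∈ (span ℝ (B '' Set.Iio s))ᗮ :=
    orthogonal_le (span_image_Iio_mono B (Nat.le_add_right s t)) (projGS_mem_orthogonal B _ _)
  rw [gsoVec, projGS_apply, sub_eq_iff_eq_add, ← sub_eq_iff_eq_add', eq_comm]
  apply eq_starProjection_of_mem_orthogonal
  · have hproj : projGS B s (B (s + t) - u) = block B s t - u := by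
      rw [projGS_eq_starProjection, map_sub, (starProjection_eq_self_iff).2 hu]
      rfl
    rw [← hproj]
    exact projGS_mem_span_block B s t (sub_projGS_mem B (s + t) _)
  · rw [sub_sub_cancel]
    refine orthogonal_le ?_ (projGS_mem_orthogonal B (s + t) _)
    rw [span_le]
    rintro _ ⟨j, hj, rfl⟩
    exact block_mem_span B hj

theorem block_linearIndependent {B : ℕ → Euc m} {n : ℕ}
    (hB : LinearIndependent ℝ (fun i : Fin n => B i)) {s ℓ : ℕ} (h : s + ℓ ≤ n) :
    LinearIndependent ℝ (fun t : Fin ℓ => block B s t) := by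
  rw [linearIndependent_iff_gsoVec_ne_zero] at hB ⊢
  intro t ht
  rw [gsoVec_block]
  exact hB _ (by omega)

theorem volB_block (B : ℕ → Euc m) (s ℓ : ℕ) :
    volB (block B s) ℓ = ∏ t ∈ range ℓ, ‖gsoVec B (s + t)‖ := by
  simp only [volB_eq_prod, gsoVec_block]

theorem log_volB_block {B : ℕ → Euc m} {n : ℕ} (hB : LinearIndependent ℝ (fun i : Fin n => B i))
    {s ℓ : ℕ} (h : s + ℓ ≤ n) :
    Real.log (volB (block B s) ℓ) = ∑ t ∈ range ℓ, Real.log ‖gsoVec B (s + t)‖ := by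
  rw [volB_block, Real.log_prod]
  exact fun t ht => norm_ne_zero_iff.2 (gsoVec_ne_zero hB (by simp at ht; omega))

section Dual

variable {C : ℕ → Euc m} {ℓ : ℕ}

theorem dualFam_apply (i : Fin ℓ) :
    dualFam C ℓ i = ∑ j : Fin ℓ, (gram C ℓ)⁻¹ j i • C j :=
  dif_pos i.2

theorem inner_dualFam_left (hC : LinearIndependent ℝ (fun i : Fin ℓ => C i)) (i j : Fin ℓ) :
    ⟪dualFam C ℓ i, C j⟫ = (1 : Matrix (Fin ℓ) (Fin ℓ) ℝ) j i := by
  have hG : IsUnit (gram C ℓ).det :=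
    (Matrix.det_gram_ne_zero_iff_linearIndependent.2 hC).isUnit
  rw [← Matrix.mul_nonsing_inv _ hG, Matrix.mul_apply, dualFam_apply, sum_inner]
  refine sum_congr rfl fun a _ => ?_
  rw [real_inner_smul_left, mul_comm]
  exact congrArg (· * _) (real_inner_comm _ _)

theorem gram_dualFam (hC : LinearIndependent ℝ (fun i : Fin ℓ => C i)) :
    gram (dualFam C ℓ) ℓ = (gram C ℓ)⁻¹ := by
  ext i j
  rw [gram, Matrix.of_apply, dualFam_apply j, inner_sum]
  simp_rw [real_inner_smul_right, inner_dualFam_left hC, Matrix.one_apply, mul_ite, mul_one,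
    mul_zero, sum_ite_eq']
  simp

theorem det_gram_revDual (hC : LinearIndependent ℝ (fun i : Fin ℓ => C i)) :
    (gram (revDual C ℓ) ℓ).det = ((gram C ℓ).det)⁻¹ := by
  have hrev : gram (revDual C ℓ) ℓ =
      (gram (dualFam C ℓ) ℓ).submatrix Fin.revPerm Fin.revPerm := by
    ext i j
    simp only [gram, revDual, Matrix.of_apply, Matrix.submatrix_apply, Fin.revPerm_apply,
      Fin.val_rev, Nat.sub_sub, Nat.add_comm 1]
  rw [hrev, Matrix.det_submatrix_equiv_self, gram_dualFam hC, Matrix.det_nonsing_inv,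
    Ring.inverse_eq_inv]

theorem revDual_linearIndependent (hC : LinearIndependent ℝ (fun i : Fin ℓ => C i)) :
    LinearIndependent ℝ (fun i : Fin ℓ => revDual C ℓ i) := by
  rw [← Matrix.det_gram_ne_zero_iff_linearIndependent]
  change (gram (revDual C ℓ) ℓ).det ≠ 0
  rw [det_gram_revDual hC]
  exact inv_ne_zero (Matrix.det_gram_ne_zero_iff_linearIndependent.2 hC)

theorem volB_revDual (hC : LinearIndependent ℝ (fun i : Fin ℓ => C i)) :
    volB (revDual C ℓ) ℓ = (volB C ℓ)⁻¹ := by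
  rw [volB, volB, det_gram_revDual hC, Real.sqrt_inv]

theorem inner_revDual_zero_gsoVec (hC : LinearIndependent ℝ (fun i : Fin ℓ => C i))
    (hℓ : 0 < ℓ) : ⟪revDual C ℓ 0, gsoVec C (ℓ - 1)⟫ = 1 := by
  set last : Fin ℓ := ⟨ℓ - 1, by omega⟩
  have hperp : revDual C ℓ 0 ∈ (span ℝ (C '' Set.Iio (ℓ - 1)))ᗮ := by
    refine mem_orthogonal_span ?_
    rintro _ ⟨j, hj, rfl⟩
    have hj' : j < ℓ - 1 := hj
    rw [real_inner_comm]
    exact (inner_dualFam_left hC last ⟨j, by omega⟩).trans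
      (Matrix.one_apply_ne (by simp [Fin.ext_iff, last]; omega))
  have hsplit : gsoVec C (ℓ - 1) = C last - (C (ℓ - 1) - gsoVec C (ℓ - 1)) := by
    rw [sub_sub_cancel]
  rw [hsplit, inner_sub_right, inner_left_of_mem_orthogonal (sub_gsoVec_mem C _) hperp,
    sub_zero]
  exact (inner_dualFam_left hC last last).trans (Matrix.one_apply_eq _)

end Dual

theorem SVPReduced.hsvpReduced {δ γ : ℝ} {C : ℕ → Euc m} {r : ℕ} (h : SVPReduced δ C r)
    (hH : IsHermiteBound γ r) (hC : LinearIndependent ℝ (fun i : Fin r => C i)) (hδ : 0 ≤ δ) :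
    HSVPReduced (δ * √γ) C r := by
  have hV : 0 ≤ volB C r ^ ((1 : ℝ) / r) := Real.rpow_nonneg (volB_nonneg C r) _
  have hlambda : lambda1 (latticeSpan C r) ≤ √γ * volB C r ^ ((1 : ℝ) / r) := by
    have hsq : lambda1 (latticeSpan C r) ^ 2 ≤ γ * (volB C r ^ ((1 : ℝ) / r)) ^ 2 := by
      rw [← Real.rpow_mul_natCast (volB_nonneg C r), one_div_mul_eq_div]
      exact hH m C hC
    have := Real.abs_le_sqrt hsq
    rw [Real.sqrt_mul' γ (sq_nonneg _), Real.sqrt_sq hV] at this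
    exact (le_abs_self _).trans this
  calc ‖C 0‖ ≤ δ * lambda1 (latticeSpan C r) := h
    _ ≤ δ * (√γ * volB C r ^ ((1 : ℝ) / r)) := by gcongr
    _ = δ * √γ * volB C r ^ ((1 : ℝ) / r) := by ring

theorem DHSVPReduced.volB_rpow_le {δ : ℝ} {C : ℕ → Euc m} {ℓ : ℕ} (h : DHSVPReduced δ C ℓ)
    (hC : LinearIndependent ℝ (fun i : Fin ℓ => C i)) (hℓ : 0 < ℓ) :
    volB C ℓ ^ ((1 : ℝ) / ℓ) ≤ δ * ‖gsoVec C (ℓ - 1)‖ := by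
  have hV : 0 < volB C ℓ ^ ((1 : ℝ) / ℓ) := Real.rpow_pos_of_pos (volB_pos hC) _
  have hdual : ‖revDual C ℓ 0‖ ≤ δ * (volB C ℓ ^ ((1 : ℝ) / ℓ))⁻¹ := by
    rwa [DHSVPReduced, HSVPReduced, volB_revDual hC, Real.inv_rpow (volB_pos hC).le] at h
  have hone : 1 ≤ ‖revDual C ℓ 0‖ * ‖gsoVec C (ℓ - 1)‖ :=
    (inner_revDual_zero_gsoVec hC hℓ).symm.le.trans (real_inner_le_norm _ _)
  have := hone.trans (mul_le_mul_of_nonneg_right hdual (norm_nonneg _))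
  rw [mul_right_comm, ← div_eq_mul_inv, one_le_div hV] at this
  exact this

theorem log_gsoVec_le_of_svpReduced {δ γ : ℝ} {B : ℕ → Euc m} {n s k : ℕ}
    (h : SVPReduced δ (block B s) k) (hH : IsHermiteBound γ k)
    (hB : LinearIndependent ℝ (fun i : Fin n => B i)) (hs : s + k ≤ n) (hk : 0 < k)
    (hδ : 0 < δ) (hγ : 0 < γ) :
    Real.log ‖gsoVec B s‖ ≤
      Real.log (δ * √γ) + (∑ t ∈ range k, Real.log ‖gsoVec B (s + t)‖) / k := by
  have hC := block_linearIndependent hB hs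
  have hV := volB_pos hC
  have hsvp : ‖gsoVec B s‖ ≤ δ * √γ * volB (block B s) k ^ ((1 : ℝ) / k) :=
    h.hsvpReduced hH hC hδ.le
  have := Real.log_le_log (norm_pos_iff.2 (gsoVec_ne_zero hB (by omega))) hsvp
  rwa [Real.log_mul (by positivity) (by positivity), Real.log_rpow hV, log_volB_block hB hs,
    one_div_mul_eq_div] at this

theorem sum_log_gsoVec_le_of_dsvpReduced {δ γ : ℝ} {B : ℕ → Euc m} {n s k : ℕ}
    (h : DSVPReduced δ (block B (s + 1)) k) (hH : IsHermiteBound γ k)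
    (hB : LinearIndependent ℝ (fun i : Fin n => B i)) (hs : s + k < n) (hk : 0 < k)
    (hδ : 0 < δ) (hγ : 0 < γ) :
    (∑ t ∈ range k, Real.log ‖gsoVec B (s + 1 + t)‖) / k ≤
      Real.log (δ * √γ) + Real.log ‖gsoVec B (s + k)‖ := by
  have hC := block_linearIndependent hB (s := s + 1) (ℓ := k) (by omega)
  have hV := volB_pos hC
  have hdhsvp : DHSVPReduced (δ * √γ) (block B (s + 1)) k :=
    h.1.hsvpReduced hH (revDual_linearIndependent hC) hδ.le
  have hvol := hdhsvp.volB_rpow_le hC hk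
  rw [gsoVec_block, show s + 1 + (k - 1) = s + k by omega] at hvol
  have := Real.log_le_log (by positivity) hvol
  rwa [Real.log_mul (by positivity) (norm_ne_zero_iff.2 (gsoVec_ne_zero hB hs)),
    Real.log_rpow hV, log_volB_block hB (by omega), one_div_mul_eq_div] at this

theorem sum_range_shift_add (a : ℕ → ℝ) (s k : ℕ) :
    ∑ t ∈ range k, a (s + 1 + t) + a s = ∑ t ∈ range k, a (s + t) + a (s + k) := by
  have h := sum_range_succ' (fun t => a (s + t)) k
  rw [sum_range_succ, add_zero] at h
  rw [h]
  exact congrArg (· + a s) (sum_congr rfl fun t _ => by rw [add_right_comm, add_assoc])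

theorem le_add_of_primal_of_dual {a : ℕ → ℝ} {c : ℝ} {s k : ℕ} (hk : 2 ≤ k)
    (hprimal : a s ≤ c + (∑ t ∈ range k, a (s + t)) / k)
    (hdual : (∑ t ∈ range k, a (s + 1 + t)) / k ≤ c + a (s + k)) :
    a s ≤ a (s + k) + 2 * k * c / (k - 1) := by
  have hk0 : (0 : ℝ) < k := by positivity
  have hk1 : (0 : ℝ) < k - 1 := sub_pos.2 (by exact_mod_cast hk)
  have h1 := (le_div_iff₀ hk0).1 (sub_le_iff_le_add'.2 hprimal)
  have h2 := (div_le_iff₀ hk0).1 hdual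
  have hshift := sum_range_shift_add a s k
  have : a s - a (s + k) ≤ 2 * k * c / (k - 1) := (le_div_iff₀ hk1).2 (by nlinarith)
  linarith

theorem slide_chain_bound {a : ℕ → ℝ} {c : ℝ} {k p : ℕ} (hk : 2 ≤ k) (hp : 0 < p)
    (hprimal : ∀ i < p, a (i * k) ≤ c + (∑ t ∈ range k, a (i * k + t)) / k)
    (hdual : ∀ i, i + 1 < p → (∑ t ∈ range k, a (i * k + 1 + t)) / k ≤ c + a (i * k + k)) :
    a 0 ≤ (p * k - 1) / (k - 1) * c + (∑ j ∈ range (p * k), a j) / (p * k) := by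
  set e := 2 * k * c / (k - 1)
  have hchain : ∀ i < p, a 0 ≤ a (i * k) + i * e := by
    intro i
    induction i with
    | zero => simp
    | succ i ih =>
      intro hi
      have := ih (by omega)
      have := le_add_of_primal_of_dual hk (hprimal i (by omega)) (hdual i hi)
      rw [add_one_mul]
      push_cast
      linarith
  have hsum : ∀ q ≤ p, q * a 0 ≤
      q * c + (∑ j ∈ range (q * k), a j) / k + q * (q - 1) / 2 * e := by
    intro q
    induction q with
    | zero => simp
    | succ q ih =>
      intro hq
      have h1 := ih (by omega)
      have h2 := hchain q (by omega)
      have h3 := hprimal q (by omega)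
      rw [add_one_mul, sum_range_add, add_div]
      push_cast
      nlinarith
  have hk1 : (k : ℝ) - 1 ≠ 0 := sub_ne_zero.2 (by exact_mod_cast (by omega : k ≠ 1))
  have hp0 : (0 : ℝ) < p := by exact_mod_cast hp
  have hrw : (p * k - 1) / (k - 1) * c + (∑ j ∈ range (p * k), a j) / (p * k) - a 0 =
      (p * c + (∑ j ∈ range (p * k), a j) / k + p * (p - 1) / 2 * e - p * a 0) / p := by
    simp only [e]
    field_simp
    ring
  rw [← sub_nonneg, hrw]
  exact div_nonneg (by linarith [hsum p le_rfl]) hp0.le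

theorem norm_gsoVec_le_of_log_le {B : ℕ → Euc m} {n d N : ℕ}
    (hB : LinearIndependent ℝ (fun i : Fin n => B i)) (hN : d + N ≤ n) (hN0 : 0 < N)
    {E e : ℝ} (hE : 0 < E)
    (h : Real.log ‖gsoVec B d‖ ≤ e * Real.log E + (∑ j ∈ range N, Real.log ‖gsoVec B (d + j)‖) / N) :
    ‖gsoVec B d‖ ≤ E ^ e * volB (block B d) N ^ ((1 : ℝ) / N) := by
  have hV := volB_pos (block_linearIndependent hB hN)
  rwa [← Real.log_le_log_iff (norm_pos_iff.2 (gsoVec_ne_zero hB (by omega))) (by positivity),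
    Real.log_mul (by positivity) (by positivity), Real.log_rpow hE, Real.log_rpow hV,
    log_volB_block hB hN, one_div_mul_eq_div]

theorem gn_slide_hsvp_general {m k d p n : ℕ} (hp : 1 ≤ p) (hk : 2 ≤ k)
    (hn : n = p * k + d) {δ γk : ℝ} (hδ : 1 ≤ δ) (hγk : 1 ≤ γk)
    (hHk : IsHermiteBound γk k)
    (B : ℕ → Euc m) (hB : LinearIndependent ℝ (fun i : Fin n => B i))
    (hprimal : ∀ i, i + 1 ≤ p → SVPReduced δ (block B (i * k + d)) k)
    (hdual : ∀ i, i + 2 ≤ p → DSVPReduced δ (block B (i * k + d + 1)) k) :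
    ‖gsoVec B d‖ ≤ (δ ^ 2 * γk) ^ (((n : ℝ) - d - 1) / (2 * ((k : ℝ) - 1))) *
      volB (block B d) (n - d) ^ ((1 : ℝ) / ((n : ℝ) - d)) := by
  subst hn
  have hδ0 : 0 < δ := by linarith
  have hγ0 : 0 < γk := by linarith
  have hblock : ∀ i < p, i * k + k ≤ p * k := fun i hi => by
    simpa [add_one_mul] using Nat.mul_le_mul_right k hi
  have hbound := slide_chain_bound (a := fun j => Real.log ‖gsoVec B (d + j)‖)
    (c := Real.log (δ * √γk)) hk hp
    (fun i hi => by
      have h := hprimal i hi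
      rw [Nat.add_comm] at h
      have := hblock i hi
      simpa only [add_assoc] using
        log_gsoVec_le_of_svpReduced h hHk hB (by omega) (by omega) hδ0 hγ0)
    (fun i hi => by
      have h := hdual i (by omega)
      rw [Nat.add_comm (i * k)] at h
      have := hblock (i + 1) hi
      rw [add_one_mul] at this
      simpa only [add_assoc] using
        sum_log_gsoVec_le_of_dsvpReduced h hHk hB (by omega) (by omega) hδ0 hγ0)
  rw [Nat.add_sub_cancel, show ((p * k + d : ℕ) : ℝ) - d = (p * k : ℕ) by push_cast; ring]
  refine norm_gsoVec_le_of_log_le hB (by omega) (Nat.mul_pos (by omega) (by omega))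
    (by positivity) (hbound.trans_eq ?_)
  have hk1 : (k : ℝ) - 1 ≠ 0 := sub_ne_zero.2 (by exact_mod_cast (by omega : k ≠ 1))
  rw [show δ ^ 2 * γk = (δ * √γk) ^ 2 by rw [mul_pow, Real.sq_sqrt hγ0.le], Real.log_pow]
  push_cast
  field_simp

/-- under the Gama–Nguyen slide-reduction conditions on the blocks of
`B_{[d+1,n]}`, the block `B_{[d+1,n]}` is `(δ²γ_k)^{(n-d-1)/(2(k-1))}`-HSVP-reduced. -/
theorem gn_slide_hsvp {m k d p n : ℕ} (hp : 1 ≤ p) (hk : 2 ≤ k) (hkd : k ≤ d)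
    (hn : n = p * k + d) {δ γk : ℝ} (hδ : 1 ≤ δ) (hγk : 1 ≤ γk)
    (hHk : IsHermiteBound γk k)
    (B : ℕ → Euc m) (hB : LinearIndependent ℝ (fun i : Fin n => B i))
    (hprimal : ∀ i, i + 1 ≤ p → SVPReduced δ (block B (i * k + d)) k)
    (hdual : ∀ i, i + 2 ≤ p → DSVPReduced δ (block B (i * k + d + 1)) k) :
    ‖gsoVec B d‖ ≤ (δ ^ 2 * γk) ^ (((n : ℝ) - d - 1) / (2 * ((k : ℝ) - 1))) *
      volB (block B d) (n - d) ^ ((1 : ℝ) / ((n : ℝ) - d)) :=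
  gn_slide_hsvp_general hp hk hn hδ hγk hHk B hB hprimal hdual
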